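/- Let C be an [n,k,d]_q linear code with dual distance d⊥, and let l ≤ min{d,n-k}-1. Then s_l(C) ≥ (n-k-l)·binomial(n,l)/binomial(n-d⊥, l). -/

import Mathlib

set_option linter.unusedSectionVars false
set_option maxHeartbeats 1000000

variable {F : Type} [Field F] [Fintype F] [DecidableEq F]

/-- The dual code of a linear code `C`. -/
def dualCode {ι : Type} [Fintype ι] (C : Submodule F (ι → F)) : Submodule F (ι → F) where
  carrier := {x | ∀ c ∈ C, ∑ i, x i * c i = 0}
  add_mem' := by
    intro a b ha hb c hc
    simp only [Set.mem_setOf_eq, Pi.add_apply] at *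
    simp [add_mul, Finset.sum_add_distrib, ha c hc, hb c hc]
  zero_mem' := by
    intro c hc
    simp
  smul_mem' := by
    intro a x hx c hc
    simp only [Set.mem_setOf_eq, Pi.smul_apply, smul_eq_mul, mul_assoc,
      ← Finset.mul_sum, hx c hc, mul_zero]

/-- `d` is the minimum distance of the code `D`. -/
def IsMinDist {ι : Type} [Fintype ι] (D : Submodule F (ι → F)) (d : ℕ) : Prop :=
  (∀ c ∈ D, c ≠ 0 → d ≤ hammingNorm c) ∧ ∃ c ∈ D, c ≠ 0 ∧ hammingNorm c = d

/-- `H(S)`: delete the rows of `H` with a nonzero entry in `S`, and the columns in `S`. -/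
def subMat {m n : ℕ} (H : Matrix (Fin m) (Fin n) F) (S : Finset (Fin n)) :
    Matrix {i : Fin m // ∀ j ∈ S, H i j = 0} {j : Fin n // j ∉ S} F :=
  Matrix.of fun i j => H i.1 j.1

/-- `H` is an `l`-separating parity-check matrix for `C`. -/
def IsSeparating {m n : ℕ} (C : Submodule F (Fin n → F)) (H : Matrix (Fin m) (Fin n) F)
    (l : ℕ) : Prop :=
  Submodule.span F (Set.range fun i => H i) = dualCode C ∧
    ∀ S : Finset (Fin n), S.card ≤ l →
      (subMat H S).rank = n - Module.finrank F C - S.card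

/-- The `l`-separating redundancy of `C`. -/
noncomputable def sepRedundancy {n : ℕ} (C : Submodule F (Fin n → F)) (l : ℕ) : ℕ :=
  sInf {m | ∃ H : Matrix (Fin m) (Fin n) F, IsSeparating C H l}

open Module Submodule

section Aux

variable {n : ℕ}

lemma mem_dualCode {W : Submodule F (Fin n → F)} {x : Fin n → F} :
    x ∈ dualCode W ↔ ∀ c ∈ W, ∑ i, x i * c i = 0 := Iff.rfl

lemma toDual_basisFun_apply (x y : Fin n → F) :
    (Pi.basisFun F (Fin n)).toDual x y = ∑ i, x i * y i := by
  conv_lhs => rw [← (Pi.basisFun F (Fin n)).sum_repr y]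
  rw [map_sum]
  simp only [map_smul, Basis.toDual_apply_left, Pi.basisFun_repr, smul_eq_mul]
  exact Finset.sum_congr rfl fun i _ => mul_comm _ _

lemma finrank_dualCode_add (W : Submodule F (Fin n → F)) :
    finrank F ↥(dualCode W) + finrank F ↥W = n := by
  classical
  have h1 : dualCode W = W.dualAnnihilator.comap
      ((Pi.basisFun F (Fin n)).toDualEquiv : (Fin n → F) →ₗ[F] _) := by
    ext x
    simp only [Submodule.mem_comap, Submodule.mem_dualAnnihilator, mem_dualCode,
      LinearEquiv.coe_coe, Basis.toDualEquiv_apply, toDual_basisFun_apply]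
  have h2 : finrank F ↥(dualCode W) = finrank F ↥W.dualAnnihilator := by
    rw [h1, Submodule.comap_equiv_eq_map_symm]
    exact LinearEquiv.finrank_map_eq _ _
  have h3 : finrank F ((Fin n → F) ⧸ W) = finrank F ↥W.dualAnnihilator :=
    (Subspace.quotEquivAnnihilator W).finrank_eq
  have h4 := Submodule.finrank_quotient_add_finrank W
  rw [h2, ← h3, h4, Module.finrank_fin_fun]

/-- Vectors supported on `S`. -/
def suppOn (F : Type) [Field F] {n : ℕ} (S : Finset (Fin n)) : Submodule F (Fin n → F) where
  carrier := {x | ∀ j ∉ S, x j = 0}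
  add_mem' := by intro a b ha hb j hj; simp [ha j hj, hb j hj]
  zero_mem' := by intro j hj; rfl
  smul_mem' := by intro a x hx j hj; simp [hx j hj]

lemma mem_suppOn {S : Finset (Fin n)} {x : Fin n → F} :
    x ∈ suppOn F S ↔ ∀ j ∉ S, x j = 0 := Iff.rfl

/-- Projection onto the coordinates outside `S`. -/
def projC (F : Type) [Field F] {n : ℕ} (S : Finset (Fin n)) :
    (Fin n → F) →ₗ[F] ({j : Fin n // j ∉ S} → F) :=
  LinearMap.pi fun j => LinearMap.proj j.1

@[simp] lemma projC_apply {S : Finset (Fin n)} (x : Fin n → F) (j : {j : Fin n // j ∉ S}) :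
    projC F S x j = x j.1 := rfl

lemma finrank_suppOn (S : Finset (Fin n)) : finrank F ↥(suppOn F S) = S.card := by
  have hker : LinearMap.ker (projC F S) = suppOn F S := by
    ext x
    simp only [LinearMap.mem_ker, mem_suppOn, funext_iff, projC_apply, Pi.zero_apply]
    exact ⟨fun h j hj => h ⟨j, hj⟩, fun h j => h j.1 j.2⟩
  have hsurj : Function.Surjective (projC F S) := by
    intro f
    refine ⟨fun j => if h : j ∈ S then 0 else f ⟨j, h⟩, ?_⟩
    funext j
    simp [j.2]
  have h := LinearMap.finrank_range_add_finrank_ker (projC F S)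
  rw [LinearMap.range_eq_top.mpr hsurj, finrank_top, hker, Module.finrank_fin_fun,
    Module.finrank_pi] at h
  have hcard : Fintype.card {j : Fin n // j ∉ S} = n - S.card := by
    rw [Fintype.card_subtype_compl, Fintype.card_coe, Fintype.card_fin]
  have hSn : S.card ≤ n := by simpa using Finset.card_le_univ S
  rw [hcard] at h
  omega

lemma inf_suppOn_eq_bot (C : Submodule F (Fin n → F)) (d : ℕ)
    (hmin : ∀ c ∈ C, c ≠ 0 → d ≤ hammingNorm c) (S : Finset (Fin n)) (hS : S.card < d) :
    C ⊓ suppOn F S = ⊥ := by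
  rw [eq_bot_iff]
  rintro x ⟨hxC, hxS⟩
  rw [Submodule.mem_bot]
  by_contra hx0
  have h1 := hmin x hxC hx0
  have h2 : hammingNorm x ≤ S.card := by
    refine Finset.card_le_card ?_
    intro j hj
    simp only [hammingNorm, Finset.mem_filter, Finset.mem_univ, true_and] at hj
    by_contra hjS
    exact hj (hxS j hjS)
  omega

lemma dualCode_sup (C : Submodule F (Fin n → F)) (S : Finset (Fin n)) :
    dualCode (C ⊔ suppOn F S) = dualCode C ⊓ suppOn F Sᶜ := by
  ext x
  constructor
  · intro hx
    refine ⟨fun c hc => hx c (Submodule.mem_sup_left hc), fun j hj => ?_⟩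
    have hj' : j ∈ S := by simpa using hj
    have hs : (Pi.single j 1 : Fin n → F) ∈ suppOn F S := by
      intro i hi
      exact Pi.single_eq_of_ne (by rintro rfl; exact hi hj') 1
    have := hx _ (Submodule.mem_sup_right hs)
    simpa [Pi.single_apply] using this
  · rintro ⟨hx1, hx2⟩ c hc
    rw [Submodule.mem_sup] at hc
    obtain ⟨a, ha, b, hb, rfl⟩ := hc
    have hb0 : ∑ i, x i * b i = 0 := by
      refine Finset.sum_eq_zero fun i _ => ?_
      by_cases hi : i ∈ S
      · rw [hx2 i (by simpa using hi), zero_mul]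
      · rw [hb i hi, mul_zero]
    simp only [Pi.add_apply, mul_add, Finset.sum_add_distrib, hx1 a ha, hb0, add_zero]

lemma finrank_DS (C : Submodule F (Fin n → F)) (d : ℕ)
    (hmin : ∀ c ∈ C, c ≠ 0 → d ≤ hammingNorm c) (S : Finset (Fin n)) (hS : S.card < d) :
    finrank F ↥(dualCode C ⊓ suppOn F Sᶜ) = n - finrank F ↥C - S.card := by
  rw [← dualCode_sup]
  have h1 := finrank_dualCode_add (C ⊔ suppOn F S)
  have h2 := Submodule.finrank_sup_add_finrank_inf_eq C (suppOn F S)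
  rw [inf_suppOn_eq_bot C d hmin S hS, finrank_bot, finrank_suppOn] at h2
  omega

lemma finrank_map_projC (C : Submodule F (Fin n → F)) (S : Finset (Fin n)) :
    finrank F ↥((dualCode C ⊓ suppOn F Sᶜ).map (projC F S)) =
      finrank F ↥(dualCode C ⊓ suppOn F Sᶜ) := by
  set D := dualCode C ⊓ suppOn F Sᶜ with hD
  have hinj : Function.Injective ((projC F S).comp D.subtype) := by
    rw [← LinearMap.ker_eq_bot, eq_bot_iff]
    rintro ⟨x, hx⟩ hker
    have hx2 : x ∈ suppOn F Sᶜ := hx.2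
    simp only [LinearMap.mem_ker, LinearMap.comp_apply, Submodule.subtype_apply] at hker
    have hx0 : x = 0 := by
      funext j
      by_cases hj : j ∈ S
      · exact hx2 j (by simpa using hj)
      · exact congrFun hker ⟨j, hj⟩
    simp [Submodule.mem_bot, Subtype.ext_iff, hx0]
  have h := LinearMap.finrank_range_of_inj hinj
  rw [LinearMap.range_comp, Submodule.range_subtype] at h
  exact h

/-- Existence of a separating parity-check matrix (rows = all dual codewords). -/
lemma exists_separating (C : Submodule F (Fin n → F)) (d l : ℕ)
    (hmin : ∀ c ∈ C, c ≠ 0 → d ≤ hammingNorm c) (hld : l < d) :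
    ∃ m, ∃ H : Matrix (Fin m) (Fin n) F, IsSeparating C H l := by
  classical
  haveI : Fintype ↥(dualCode C) := Fintype.ofFinite _
  set m := Fintype.card ↥(dualCode C) with hm
  set e : Fin m ≃ ↥(dualCode C) := (Fintype.equivFin ↥(dualCode C)).symm with he
  set H : Matrix (Fin m) (Fin n) F := Matrix.of fun i j => (e i : Fin n → F) j with hH
  have hrow : ∀ i, H i = (e i : Fin n → F) := fun i => rfl
  have hrange : (Set.range fun i => H i) = (dualCode C : Set (Fin n → F)) := by
    ext v
    constructor
    · rintro ⟨i, rfl⟩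
      exact (e i).2
    · intro hv
      refine ⟨e.symm ⟨v, hv⟩, ?_⟩
      show H (e.symm ⟨v, hv⟩) = v
      rw [hrow, Equiv.apply_symm_apply]
  refine ⟨m, H, ?_, ?_⟩
  · rw [hrange, Submodule.span_eq]
  · intro S hSl
    have hS : S.card < d := lt_of_le_of_lt hSl hld
    rw [Matrix.rank_eq_finrank_span_row]
    have hset : Set.range (subMat H S) =
        projC F S '' ((dualCode C ⊓ suppOn F Sᶜ : Submodule F (Fin n → F)) : Set (Fin n → F)) := by
      ext w
      constructor
      · rintro ⟨i, rfl⟩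
        refine ⟨H i.1, ⟨by rw [hrow]; exact (e i.1).2, fun j hj => i.2 j (by simpa using hj)⟩, ?_⟩
        funext j
        rfl
      · rintro ⟨v, ⟨hv1, hv2⟩, rfl⟩
        have hvan : ∀ j ∈ S, v j = 0 := fun j hj => hv2 j (by simpa using hj)
        have hHv : H (e.symm ⟨v, hv1⟩) = v := by rw [hrow, Equiv.apply_symm_apply]
        refine ⟨⟨e.symm ⟨v, hv1⟩, fun j hj => by rw [hHv]; exact hvan j hj⟩, ?_⟩
        funext j
        show H (e.symm ⟨v, hv1⟩) j.1 = v j.1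
        rw [hHv]
      
    rw [Matrix.row, hset, Submodule.span_image, Submodule.span_eq, finrank_map_projC,
      finrank_DS C d hmin S hS]

open Classical in
/-- The rank of `subMat H S` is at most the number of nonzero rows vanishing on `S`. -/
lemma rank_le_card_filter {m : ℕ} (H : Matrix (Fin m) (Fin n) F) (S : Finset (Fin n)) :
    (subMat H S).rank ≤
      (Finset.univ.filter fun i : Fin m => H i ≠ 0 ∧ ∀ j ∈ S, H i j = 0).card := by
  classical
  rw [Matrix.rank_eq_finrank_span_row]
  set T := Finset.univ.filter fun i : Fin m => H i ≠ 0 ∧ ∀ j ∈ S, H i j = 0 with hT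
  set f : Fin m → ({j : Fin n // j ∉ S} → F) := fun i => projC F S (H i) with hf
  have hsub : Set.range (subMat H S) ⊆
      (↑(T.image f) : Set ({j : Fin n // j ∉ S} → F)) ∪ {0} := by
    rintro w ⟨i, rfl⟩
    by_cases h0 : H i.1 = 0
    · right
      simp only [Set.mem_singleton_iff]
      funext j
      show H i.1 j.1 = 0
      rw [h0]
      rfl
    · left
      simp only [Finset.coe_image, Set.mem_image, Finset.mem_coe, hT, Finset.mem_filter,
        Finset.mem_univ, true_and]
      exact ⟨i.1, ⟨h0, i.2⟩, rfl⟩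
  calc finrank F ↥(Submodule.span F (Set.range (subMat H S)))
      ≤ finrank F ↥(Submodule.span F
          ((↑(T.image f) : Set ({j : Fin n // j ∉ S} → F)) ∪ {0})) :=
        Submodule.finrank_mono (Submodule.span_mono hsub)
    _ = finrank F ↥(Submodule.span F (↑(T.image f) : Set ({j : Fin n // j ∉ S} → F))) := by
        rw [Submodule.span_union, Submodule.span_zero_singleton, sup_bot_eq]
    _ ≤ (T.image f).card := finrank_span_finset_le_card _
    _ ≤ T.card := Finset.card_image_le


end Aux

/-- Volume lower bound on the `l`-separating redundancy:
`s_l(C) ≥ (n-k-l)·C(n,l)/C(n-d⊥,l)`. -/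
theorem stmt_12 (n k d dperp l : ℕ)
    (C : Submodule F (Fin n → F)) (hk : Module.finrank F C = k) (hd : IsMinDist C d)
    (hdp : IsMinDist (dualCode C) dperp)
    (hl : l ≤ min d (n - k) - 1) :
    ((n - k - l) * n.choose l : ℚ) / ((n - dperp).choose l : ℚ) ≤
      (sepRedundancy C l : ℚ) := by
  classical
  by_cases h0 : n - k - l = 0
  · have hn : (n : ℚ) ≤ (k : ℚ) + (l : ℚ) := by exact_mod_cast (by omega : n ≤ k + l)
    have h1 : ((n : ℚ) - k - l) * n.choose l ≤ 0 :=
      mul_nonpos_of_nonpos_of_nonneg (by linarith) (by positivity)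
    have h2 : ((n : ℚ) - k - l) * n.choose l / ((n - dperp).choose l : ℚ) ≤ 0 :=
      div_nonpos_of_nonpos_of_nonneg h1 (by positivity)
    exact h2.trans (by positivity)
  by_cases hc0 : (n - dperp).choose l = 0
  · rw [hc0]
    simp only [Nat.cast_zero, div_zero]
    positivity
  -- basic facts
  have hd1 : 1 ≤ d := by
    obtain ⟨c, hcC, hc0', hcd⟩ := hd.2
    rcases Nat.eq_zero_or_pos d with h | h
    · exact absurd (hammingNorm_eq_zero.mp (hcd.trans h)) hc0'
    · exact h
  have hmin1 := min_le_left d (n - k)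
  have hmin2 := min_le_right d (n - k)
  have hld : l < d := by omega
  have hkn : k ≤ n := by
    have := Submodule.finrank_le C
    rw [hk, Module.finrank_fin_fun] at this
    exact this
  -- the defining set is nonempty
  have hne : {m | ∃ H : Matrix (Fin m) (Fin n) F, IsSeparating C H l}.Nonempty := by
    obtain ⟨m, H, hH⟩ := exists_separating C d l hd.1 hld
    exact ⟨m, H, hH⟩
  have hmem := Nat.sInf_mem hne
  obtain ⟨H, hH⟩ := hmem
  set m := sepRedundancy C l with hmdef
  -- counting bound
  have key : (n - k - l) * n.choose l ≤ m * (n - dperp).choose l := by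
    have hrank : ∀ S ∈ Finset.univ.powersetCard l (α := Fin n), n - k - l ≤
        (Finset.univ.filter fun i : Fin m => H i ≠ 0 ∧ ∀ j ∈ S, H i j = 0).card := by
      intro S hS
      rw [Finset.mem_powersetCard] at hS
      have := hH.2 S hS.2.le
      rw [hk, hS.2] at this
      calc n - k - l = (subMat H S).rank := this.symm
        _ ≤ _ := rank_le_card_filter H S
    have step1 : (n - k - l) * n.choose l ≤
        ∑ S ∈ Finset.univ.powersetCard l (α := Fin n),
          (Finset.univ.filter fun i : Fin m => H i ≠ 0 ∧ ∀ j ∈ S, H i j = 0).card := by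
      have := Finset.sum_le_sum hrank
      rw [Finset.sum_const, Finset.card_powersetCard, Finset.card_univ, Fintype.card_fin,
        smul_eq_mul] at this
      calc (n - k - l) * n.choose l = n.choose l * (n - k - l) := mul_comm _ _
        _ ≤ _ := this
    have step2 : ∑ S ∈ Finset.univ.powersetCard l (α := Fin n),
          (Finset.univ.filter fun i : Fin m => H i ≠ 0 ∧ ∀ j ∈ S, H i j = 0).card
        = ∑ i : Fin m, ((Finset.univ.powersetCard l (α := Fin n)).filter
            fun S => H i ≠ 0 ∧ ∀ j ∈ S, H i j = 0).card := by
      simp_rw [Finset.card_filter]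
      rw [Finset.sum_comm]
      refine Finset.sum_congr rfl fun i _ => Finset.sum_congr rfl fun S _ => ?_
      congr 1
    have step3 : ∀ i : Fin m, ((Finset.univ.powersetCard l (α := Fin n)).filter
        fun S => H i ≠ 0 ∧ ∀ j ∈ S, H i j = 0).card ≤ (n - dperp).choose l := by
      intro i
      by_cases h0' : H i = 0
      · simp [h0']
      · have hfilter : ((Finset.univ.powersetCard l (α := Fin n)).filter
            fun S => H i ≠ 0 ∧ ∀ j ∈ S, H i j = 0)
            = (Finset.univ.filter fun j => H i j = 0).powersetCard l := by
          ext S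
          rw [Finset.mem_filter, Finset.mem_powersetCard, Finset.mem_powersetCard]
          constructor
          · rintro ⟨⟨-, hcard⟩, -, hvan⟩
            exact ⟨fun j hj => Finset.mem_filter.mpr ⟨Finset.mem_univ j, hvan j hj⟩, hcard⟩
          · rintro ⟨hsub, hcard⟩
            exact ⟨⟨Finset.subset_univ S, hcard⟩, h0',
              fun j hj => (Finset.mem_filter.mp (hsub hj)).2⟩
        rw [hfilter, Finset.card_powersetCard]
        apply Nat.choose_le_choose
        have hHd : H i ∈ dualCode C := by
          rw [← hH.1]
          exact Submodule.subset_span ⟨i, rfl⟩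
        have hnorm := hdp.1 (H i) hHd h0'
        have hzc : (Finset.univ.filter fun j => H i j = 0).card = n - hammingNorm (H i) := by
          have heq : (Finset.univ.filter fun j => H i j = 0)
              = (Finset.univ.filter fun j => H i j ≠ 0)ᶜ := by
            ext j
            simp [Finset.mem_compl]
          rw [heq, Finset.card_compl, Fintype.card_fin]
          rfl
        rw [hzc]
        exact Nat.sub_le_sub_left hnorm n
    calc (n - k - l) * n.choose l
        ≤ ∑ S ∈ Finset.univ.powersetCard l (α := Fin n),
            (Finset.univ.filter fun i : Fin m => H i ≠ 0 ∧ ∀ j ∈ S, H i j = 0).card := step1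
      _ = _ := step2
      _ ≤ ∑ _i : Fin m, (n - dperp).choose l := Finset.sum_le_sum fun i _ => step3 i
      _ = m * (n - dperp).choose l := by
          rw [Finset.sum_const, Finset.card_univ, Fintype.card_fin, smul_eq_mul]
  -- conclude
  have hnum : ((n - k - l : ℕ) : ℚ) = (n : ℚ) - k - l := by
    rw [Nat.cast_sub (by omega), Nat.cast_sub (by omega : k ≤ n)]
  have hcpos : (0 : ℚ) < ((n - dperp).choose l : ℚ) := by
    exact_mod_cast Nat.pos_of_ne_zero hc0
  rw [← hnum, div_le_iff₀ hcpos]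
  exact_mod_cast key
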